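/- Let G = {1,2,3,4} with its natural linear order and let K be a formal context with object set G whose extents are exactly the intervals of this chain together with G and the empty set (i.e., Ext(K) = {A ⊆ G : A is of the form {i,…,j}} ∪ {G, ∅}). Then the interordinal scaling dimension of K is 1, while the ordinal scaling dimension of K is 2. In particular, the interordinal scaling dimension can be strictly smaller than the ordinal scaling dimension. -/

import Mathlib

/-- `E` is an extent of the formal context `(G, M, I)`. -/
def IsExtent {G M : Type*} (I : G → M → Prop) (E : Set G) : Prop :=
  ∃ B : Set M, E = {g | ∀ m ∈ B, I g m}

/-- `K = (G, M, I)` has ordinal scaling dimension at most `d`. -/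
def HasOSDAtMost {G M : Type*} (I : G → M → Prop) (d : ℕ) : Prop :=
  ∃ C : Fin d → Set (Set G), (∀ i, IsChain (· ⊆ ·) (C i)) ∧
    {E | IsExtent I E} = {E | ∃ F ⊆ ⋃ i, C i, E = ⋂₀ F}

/-- The ordinal scaling dimension: the least `d` such that `HasOSDAtMost I d`. -/
noncomputable def osd {G M : Type*} (I : G → M → Prop) : ℕ :=
  sInf {d | HasOSDAtMost I d}

/-- An extent ladder of `K = (G, M, I)`: a set of nonempty extents containing no three
pairwise `⊆`-incomparable members and closed under complementation in `G`. -/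
def IsExtentLadder {G M : Type*} (I : G → M → Prop) (R : Set (Set G)) : Prop :=
  (∀ A ∈ R, IsExtent I A ∧ A.Nonempty) ∧
  (¬ ∃ A ∈ R, ∃ B ∈ R, ∃ C ∈ R,
    (¬ A ⊆ B ∧ ¬ B ⊆ A) ∧ (¬ A ⊆ C ∧ ¬ C ⊆ A) ∧ (¬ B ⊆ C ∧ ¬ C ⊆ B)) ∧
  (∀ A ∈ R, Aᶜ ∈ R)

/-- `K` has interordinal scaling dimension at most `d`. -/
def HasISDAtMost {G M : Type*} (I : G → M → Prop) (d : ℕ) : Prop :=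
  ∃ R : Fin d → Set (Set G), (∀ i, IsExtentLadder I (R i)) ∧
    {E | IsExtent I E} = {E | ∃ F ⊆ ⋃ i, R i, E = ⋂₀ F}

/-- The interordinal scaling dimension: the least `d` such that `HasISDAtMost I d`. -/
noncomputable def isd {G M : Type*} (I : G → M → Prop) : ℕ :=
  sInf {d | HasISDAtMost I d}

/-!
Every interval of the chain `0 < 1 < ⋯ < n + 1` is the intersection of a down-set
`{0, …, k}` and an up-set `{k + 1, …, n + 1}`, and each of these two chains consists of the
complements of the other. So their union is a single extent ladder that generates all
extents, giving `isd ≤ 1`, and the two chains themselves give `osd ≤ 2`. The bounds are sharp: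
`∅ ≠ G` is an extent, so some scale is needed; and a single chain puts every extent other
than `G` on that chain, whereas the singletons `{0}` and `{n + 1}` are incomparable extents.
-/

open Set

section SInterClosure

variable {α : Type*}

def sInterClosure (R : Set (Set α)) : Set (Set α) :=
  {E | ∃ F ⊆ R, E = ⋂₀ F}

lemma univ_mem_sInterClosure (R : Set (Set α)) : univ ∈ sInterClosure R :=
  ⟨∅, empty_subset R, sInter_empty.symm⟩

lemma insert_univ_subset_sInterClosure (R : Set (Set α)) : insert univ R ⊆ sInterClosure R := by
  rintro A (rfl | hA)
  exacts [univ_mem_sInterClosure R, ⟨{A}, singleton_subset_iff.2 hA, (sInter_singleton A).symm⟩]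

lemma inter_mem_sInterClosure {R : Set (Set α)} {A B : Set α} (hA : A ∈ sInterClosure R)
    (hB : B ∈ sInterClosure R) : A ∩ B ∈ sInterClosure R := by
  obtain ⟨F, hF, rfl⟩ := hA
  obtain ⟨F', hF', rfl⟩ := hB
  exact ⟨F ∪ F', union_subset hF hF', (sInter_union F F').symm⟩

lemma sInterClosure_mono {R S : Set (Set α)} (h : R ⊆ S) : sInterClosure R ⊆ sInterClosure S :=
  fun _ ⟨F, hF, hE⟩ => ⟨F, hF.trans h, hE⟩

lemma sInterClosure_empty : sInterClosure (∅ : Set (Set α)) = {univ} := by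
  refine subset_antisymm ?_ (singleton_subset_iff.2 (univ_mem_sInterClosure ∅))
  rintro _ ⟨F, hF, rfl⟩
  rw [subset_empty_iff.1 hF, sInter_empty]
  rfl

lemma IsChain.sInter_mem {F : Set (Set α)} (hF : IsChain (· ⊆ ·) F) (hfin : F.Finite)
    (hne : F.Nonempty) : ⋂₀ F ∈ F := by
  obtain ⟨m, hm⟩ := hfin.exists_minimal hne
  have hleast : IsLeast F m := ⟨hm.prop, fun E hE =>
    (hF.total hm.prop hE).elim id (hm.le_of_le hE)⟩
  rw [← sInf_eq_sInter, hleast.csInf_eq]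
  exact hm.prop

lemma sInterClosure_subset_insert_univ [Finite α] {C : Set (Set α)} (hC : IsChain (· ⊆ ·) C) :
    sInterClosure C ⊆ insert univ C := by
  rintro _ ⟨F, hFC, rfl⟩
  rcases F.eq_empty_or_nonempty with rfl | hne
  · exact Or.inl sInter_empty
  · exact Or.inr (hFC ((hC.mono hFC).sInter_mem F.toFinite hne))

lemma not_exists_three_incomparable_of_isChain_union {D U : Set (Set α)}
    (hD : IsChain (· ⊆ ·) D) (hU : IsChain (· ⊆ ·) U) :
    ¬ ∃ A ∈ D ∪ U, ∃ B ∈ D ∪ U, ∃ C ∈ D ∪ U,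
      (¬ A ⊆ B ∧ ¬ B ⊆ A) ∧ (¬ A ⊆ C ∧ ¬ C ⊆ A) ∧ (¬ B ⊆ C ∧ ¬ C ⊆ B) := by
  rintro ⟨A, hA, B, hB, C, hC, hAB, hAC, hBC⟩
  have comparable : ∀ {X Y : Set α}, X ∈ D ∧ Y ∈ D ∨ X ∈ U ∧ Y ∈ U → X ⊆ Y ∨ Y ⊆ X := by
    rintro X Y (⟨hX, hY⟩ | ⟨hX, hY⟩)
    exacts [hD.total hX hY, hU.total hX hY]
  have pigeonhole : (A ∈ D ∧ B ∈ D ∨ A ∈ U ∧ B ∈ U) ∨ (A ∈ D ∧ C ∈ D ∨ A ∈ U ∧ C ∈ U) ∨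
      (B ∈ D ∧ C ∈ D ∨ B ∈ U ∧ C ∈ U) := by
    rw [mem_union] at hA hB hC
    tauto
  rcases pigeonhole with h | h | h
  · exact (comparable h).elim hAB.1 hAB.2
  · exact (comparable h).elim hAC.1 hAC.2
  · exact (comparable h).elim hBC.1 hBC.2

end SInterClosure

section ScalingDimension

variable {G M : Type*} {I : G → M → Prop}

lemma isExtent_sInter {F : Set (Set G)} (hF : ∀ E ∈ F, IsExtent I E) : IsExtent I (⋂₀ F) := by
  choose B hB using hF
  refine ⟨⋃ (E) (hE : E ∈ F), B E hE, ?_⟩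
  ext g
  simp only [mem_sInter, mem_ofPred_eq, mem_iUnion]
  constructor
  · rintro hg m ⟨E, hE, hm⟩
    have hgE := hg E hE
    rw [hB E hE] at hgE
    exact hgE m hm
  · intro hg E hE
    rw [hB E hE]
    exact fun m hm => hg m ⟨E, hE, hm⟩

lemma not_hasOSDAtMost_zero {E : Set G} (hE : IsExtent I E) (hne : E ≠ univ) :
    ¬ HasOSDAtMost I 0 := by
  rintro ⟨C, -, hext⟩
  have hmem : E ∈ sInterClosure (⋃ i, C i) := (Set.ext_iff.1 hext E).1 hE
  rw [iUnion_of_empty, sInterClosure_empty] at hmem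
  exact hne hmem

lemma not_hasISDAtMost_zero {E : Set G} (hE : IsExtent I E) (hne : E ≠ univ) :
    ¬ HasISDAtMost I 0 := by
  rintro ⟨R, -, hext⟩
  have hmem : E ∈ sInterClosure (⋃ i, R i) := (Set.ext_iff.1 hext E).1 hE
  rw [iUnion_of_empty, sInterClosure_empty] at hmem
  exact hne hmem

lemma not_hasOSDAtMost_one [Finite G] {A B : Set G} (hA : IsExtent I A) (hB : IsExtent I B)
    (hAB : ¬ A ⊆ B) (hBA : ¬ B ⊆ A) : ¬ HasOSDAtMost I 1 := by
  rintro ⟨C, hC, hext⟩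
  have hunion : ⋃ i, C i = C 0 := iSup_unique C
  have mem_chain : ∀ {E}, IsExtent I E → E ≠ univ → E ∈ C 0 := fun {E} hE hne => by
    have hmem : E ∈ sInterClosure (⋃ i, C i) := (Set.ext_iff.1 hext E).1 hE
    rw [hunion] at hmem
    exact (sInterClosure_subset_insert_univ (hC 0) hmem).resolve_left hne
  have hA' := mem_chain hA fun h => hBA (h ▸ subset_univ B)
  have hB' := mem_chain hB fun h => hAB (h ▸ subset_univ A)
  exact ((hC 0).total hA' hB').elim hAB hBA

end ScalingDimension

section IntervalContext

variable {n : ℕ}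

def chainIntervals (α : Type*) [Preorder α] : Set (Set α) :=
  {A | ∃ i j : α, A = Icc i j} ∪ {univ, ∅}

/- Indexing by `Fin (n + 1)` leaves out `Iic (last) = univ` and `Ioi (last) = ∅`; the latter
could not belong to an extent ladder. -/
def lowerChain (n : ℕ) : Set (Set (Fin (n + 2))) :=
  range fun k : Fin (n + 1) => Iic k.castSucc

def upperChain (n : ℕ) : Set (Set (Fin (n + 2))) :=
  range fun k : Fin (n + 1) => Ioi k.castSucc

lemma isChain_lowerChain : IsChain (· ⊆ ·) (lowerChain n) :=
  (monotone_Iic.comp Fin.strictMono_castSucc.monotone).isChain_range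

lemma isChain_upperChain : IsChain (· ⊆ ·) (upperChain n) :=
  (antitone_Ioi.comp_monotone Fin.strictMono_castSucc.monotone).isChain_range

lemma Iic_mem_insert_univ_lowerChain (j : Fin (n + 2)) : Iic j ∈ insert univ (lowerChain n) := by
  rcases Fin.eq_castSucc_or_eq_last j with ⟨k, rfl⟩ | rfl
  · exact Or.inr ⟨k, rfl⟩
  · exact Or.inl (eq_univ_of_forall Fin.le_last)

lemma Ici_mem_insert_univ_upperChain (i : Fin (n + 2)) : Ici i ∈ insert univ (upperChain n) := by
  rcases Fin.eq_zero_or_eq_succ i with rfl | ⟨k, rfl⟩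
  · exact Or.inl (eq_univ_of_forall Fin.zero_le)
  · refine Or.inr ⟨k, ?_⟩
    ext x
    simp [Fin.castSucc_lt_iff_succ_le]

lemma chainIntervals_subset_sInterClosure :
    chainIntervals (Fin (n + 2)) ⊆ sInterClosure (lowerChain n ∪ upperChain n) := by
  have hlower : insert univ (lowerChain n) ⊆ sInterClosure (lowerChain n ∪ upperChain n) :=
    (insert_univ_subset_sInterClosure _).trans (sInterClosure_mono subset_union_left)
  have hupper : insert univ (upperChain n) ⊆ sInterClosure (lowerChain n ∪ upperChain n) :=
    (insert_univ_subset_sInterClosure _).trans (sInterClosure_mono subset_union_right)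
  rintro _ (⟨i, j, rfl⟩ | rfl | rfl)
  · rw [← Ici_inter_Iic]
    exact inter_mem_sInterClosure (hupper (Ici_mem_insert_univ_upperChain i))
      (hlower (Iic_mem_insert_univ_lowerChain j))
  · exact univ_mem_sInterClosure _
  · rw [← inter_compl_self (Iic (0 : Fin (n + 2))), compl_Iic]
    exact inter_mem_sInterClosure (hlower (Or.inr ⟨0, congrArg Iic Fin.castSucc_zero⟩))
      (hupper (Or.inr ⟨0, congrArg Ioi Fin.castSucc_zero⟩))

lemma lowerChain_union_upperChain_subset_chainIntervals :
    lowerChain n ∪ upperChain n ⊆ chainIntervals (Fin (n + 2)) := by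
  rintro _ (⟨k, rfl⟩ | ⟨k, rfl⟩)
  · exact Or.inl ⟨0, k.castSucc, by ext x; simp⟩
  · exact Or.inl ⟨k.succ, Fin.last _, by ext x; simp [Fin.castSucc_lt_iff_succ_le, Fin.le_last]⟩

variable {M : Type*} {I : Fin (n + 2) → M → Prop}

lemma extents_eq_sInterClosure_lowerChain_union_upperChain
    (hext : {E | IsExtent I E} = chainIntervals (Fin (n + 2))) :
    {E | IsExtent I E} = sInterClosure (lowerChain n ∪ upperChain n) := by
  refine subset_antisymm (hext ▸ chainIntervals_subset_sInterClosure) ?_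
  rintro _ ⟨F, hF, rfl⟩
  exact isExtent_sInter fun E hE =>
    (Set.ext_iff.1 hext E).2 (lowerChain_union_upperChain_subset_chainIntervals (hF hE))

lemma isExtentLadder_lowerChain_union_upperChain
    (hext : {E | IsExtent I E} = chainIntervals (Fin (n + 2))) :
    IsExtentLadder I (lowerChain n ∪ upperChain n) := by
  refine ⟨fun A hA => ⟨?_, ?_⟩,
    not_exists_three_incomparable_of_isChain_union isChain_lowerChain isChain_upperChain, ?_⟩
  · exact (Set.ext_iff.1 hext A).2 (lowerChain_union_upperChain_subset_chainIntervals hA)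
  · rcases hA with ⟨k, rfl⟩ | ⟨k, rfl⟩
    exacts [nonempty_Iic, ⟨Fin.last _, Fin.castSucc_lt_last k⟩]
  · rintro _ (⟨k, rfl⟩ | ⟨k, rfl⟩)
    exacts [Or.inr ⟨k, compl_Iic.symm⟩, Or.inl ⟨k, compl_Ioi.symm⟩]

lemma hasISDAtMost_one_of_extents_eq_chainIntervals
    (hext : {E | IsExtent I E} = chainIntervals (Fin (n + 2))) : HasISDAtMost I 1 := by
  refine ⟨fun _ => lowerChain n ∪ upperChain n,
    fun _ => isExtentLadder_lowerChain_union_upperChain hext, ?_⟩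
  rw [iUnion_const]
  exact extents_eq_sInterClosure_lowerChain_union_upperChain hext

lemma hasOSDAtMost_two_of_extents_eq_chainIntervals
    (hext : {E | IsExtent I E} = chainIntervals (Fin (n + 2))) : HasOSDAtMost I 2 := by
  refine ⟨![lowerChain n, upperChain n],
    Fin.forall_fin_two.2 ⟨isChain_lowerChain, isChain_upperChain⟩, ?_⟩
  have hunion : ⋃ i, ![lowerChain n, upperChain n] i = lowerChain n ∪ upperChain n := by
    ext
    simp [Fin.exists_fin_two]
  rw [hunion]
  exact extents_eq_sInterClosure_lowerChain_union_upperChain hext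

theorem isd_eq_one_and_osd_eq_two_of_extents_eq_chainIntervals
    (hext : {E | IsExtent I E} = chainIntervals (Fin (n + 2))) : isd I = 1 ∧ osd I = 2 := by
  have hempty : IsExtent I ∅ := (Set.ext_iff.1 hext ∅).2 (Or.inr (Or.inr rfl))
  have hsingleton (a : Fin (n + 2)) : IsExtent I {a} :=
    (Set.ext_iff.1 hext _).2 (Or.inl ⟨a, a, (Icc_self a).symm⟩)
  have hne : (0 : Fin (n + 2)) ≠ Fin.last (n + 1) := Fin.last_pos.ne
  refine ⟨IsLeast.csInf_eq ⟨hasISDAtMost_one_of_extents_eq_chainIntervals hext, fun d hd => ?_⟩,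
    IsLeast.csInf_eq ⟨hasOSDAtMost_two_of_extents_eq_chainIntervals hext, fun d hd => ?_⟩⟩
  · by_contra! hlt
    obtain rfl : d = 0 := by omega
    exact not_hasISDAtMost_zero hempty empty_ne_univ hd
  · by_contra! hlt
    interval_cases d
    · exact not_hasOSDAtMost_zero hempty empty_ne_univ hd
    · exact not_hasOSDAtMost_one (hsingleton 0) (hsingleton (Fin.last _))
        (singleton_subset_singleton.not.2 hne) (singleton_subset_singleton.not.2 hne.symm) hd

end IntervalContext

/-- If `K` is a formal context on the four-element chain `Fin 4` whose
extents are exactly the intervals `{i, …, j}` together with the whole set and `∅`, then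
the interordinal scaling dimension of `K` is `1` while its ordinal scaling dimension is
`2`.  In particular the interordinal scaling dimension can be strictly smaller than the
ordinal scaling dimension. -/
theorem isd_lt_osd_on_four_chain {M : Type*} (I : Fin 4 → M → Prop)
    (hext : {E | IsExtent I E} =
      {A : Set (Fin 4) | ∃ i j : Fin 4, A = Set.Icc i j} ∪ {Set.univ, ∅}) :
    isd I = 1 ∧ osd I = 2 :=
  isd_eq_one_and_osd_eq_two_of_extents_eq_chainIntervals (n := 2) hext
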